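/- arXiv:2409.10261 — 6 statements merged into one kernel-verified Lean document; each statement's English description precedes it below -/
import Mathlib

section
/- Every chordal graph that is not complete contains two nonadjacent simplicial vertices. -/
open scoped Classical

/-- A graph is chordal if every cycle of length greater than three has a chord, i.e.,
an edge joining two vertices of the cycle that is not itself an edge of the cycle. -/
def SimpleGraph.IsChordal {V : Type*} (G : SimpleGraph V) : Prop :=
  ∀ ⦃v : V⦄ (w : G.Walk v v), w.IsCycle → 3 < w.length →
    ∃ a b : V, G.Adj a b ∧ a ∈ w.support ∧ b ∈ w.support ∧ s(a, b) ∉ w.edges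

/-- A vertex is simplicial if its neighborhood is a clique. -/
def SimpleGraph.IsSimplicial {V : Type*} (G : SimpleGraph V) (x : V) : Prop :=
  G.IsClique (G.neighborSet x)

/-! Dirac's argument. Take nonadjacent `a`, `b` and an inclusion-minimal set `S` separating them.
Chordality forces `S` to be a clique: two nonadjacent `u, v ∈ S` both have neighbours in the
components `A ∋ a` and `B ∋ b` of `G - S`, so shortest `u`–`v` paths through `A` and through `B`
close up to a chordless cycle of length at least four. By induction, the smaller chordal graph
induced on `A ∪ S` is complete or has two nonadjacent simplicial vertices; as `S` is a clique, in
either case some vertex of `A` is simplicial there, hence in `G`, because all its neighbours lie in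
`A ∪ S`. The same on the side of `b` gives the second vertex. -/

namespace SimpleGraph

variable {V : Type*} {G : SimpleGraph V} {U S : Set V} {a b u v x y : V}

def ReachableIn (G : SimpleGraph V) (U : Set V) (x y : V) : Prop :=
  ∃ w : G.Walk x y, ∀ z ∈ w.support, z ∈ U

namespace ReachableIn

theorem refl (hx : x ∈ U) : G.ReachableIn U x x :=
  ⟨.nil, by simpa using hx⟩

theorem symm (h : G.ReachableIn U x y) : G.ReachableIn U y x := by
  obtain ⟨w, hw⟩ := h
  exact ⟨w.reverse, by simpa using hw⟩

theorem trans {z : V} (h : G.ReachableIn U x y) (h' : G.ReachableIn U y z) :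
    G.ReachableIn U x z := by
  obtain ⟨w, hw⟩ := h
  obtain ⟨w', hw'⟩ := h'
  exact ⟨w.append w', by simpa [Walk.mem_support_append_iff, or_imp, forall_and] using ⟨hw, hw'⟩⟩

theorem mono {U' : Set V} (h : G.ReachableIn U x y) (hU : U ⊆ U') : G.ReachableIn U' x y :=
  let ⟨w, hw⟩ := h
  ⟨w, fun z hz => hU (hw z hz)⟩

theorem mem_right (h : G.ReachableIn U x y) : y ∈ U :=
  let ⟨w, hw⟩ := h
  hw y w.end_mem_support

theorem reachableIn_setOf_reachableIn (h : G.ReachableIn U x y) (ha : G.ReachableIn U a x) :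
    G.ReachableIn {z | G.ReachableIn U a z} x y := by
  obtain ⟨w, hw⟩ := h
  exact ⟨w, fun z hz => ha.trans
    ⟨w.takeUntil z hz, fun t ht => hw t (w.support_takeUntil_subset_support hz ht)⟩⟩

end ReachableIn

theorem Adj.reachableIn (h : G.Adj x y) (hx : x ∈ U) (hy : y ∈ U) : G.ReachableIn U x y :=
  ⟨h.toWalk, by simp [hx, hy]⟩

theorem not_reachableIn_pair (hxy : x ≠ y) (h : ¬G.Adj x y) : ¬G.ReachableIn {x, y} x y := by
  rintro ⟨_ | ⟨hadj, p⟩, hw⟩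
  · exact hxy rfl
  · rcases hw _ (List.mem_cons_of_mem x p.start_mem_support) with rfl | rfl
    exacts [hadj.ne rfl, h hadj]

namespace Walk

theorem IsPath.start_notMem_support_tail {p : G.Walk u v} (hp : p.IsPath) :
    u ∉ p.support.tail := by
  have := hp.support_nodup
  rw [← p.cons_tail_support, List.nodup_cons] at this
  exact this.1

theorem one_lt_length_of_notMem_edges (w : G.Walk u v) (huv : u ≠ v) (h : s(u, v) ∉ w.edges) :
    1 < w.length := by
  rcases w with _ | ⟨_, _ | _⟩
  · exact absurd rfl huv
  · simp at h
  · simp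

theorem exists_adj_reachableIn {T : Set V} {s : V} :
    ∀ {u v : V} (w : G.Walk u v), (∀ z ∈ w.support, z ∈ insert s T) → s ∈ w.support → u ≠ s →
      ∃ x, G.Adj s x ∧ G.ReachableIn T u x
  | _, _, .nil, _, hs, hus => absurd (by simpa using hs) hus.symm
  | u, _, .cons (v := u') hadj p, hw, hs, hus => by
    have huT : u ∈ T := (hw u (by simp)).resolve_left hus
    by_cases hu's : u' = s
    · subst hu's
      exact ⟨u, hadj.symm, .refl huT⟩
    have hu'T : u' ∈ T := (hw u' (by simp)).resolve_left hu's
    obtain ⟨x, hsx, hu'x⟩ := p.exists_adj_reachableIn (fun z hz => hw z (by simp [hz]))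
      (by simpa [Ne.symm hus] using hs) hu's
    exact ⟨x, hsx, (hadj.reachableIn huT hu'T).trans hu'x⟩

theorem exists_shorter_of_chord_from_start (w : G.Walk u v) (hadj : G.Adj u y)
    (hy : y ∈ w.support) (he : s(u, y) ∉ w.edges) :
    ∃ w' : G.Walk u v, w'.length < w.length ∧ ∀ z ∈ w'.support, z ∈ w.support := by
  have hlong : 1 < (w.takeUntil y hy).length :=
    one_lt_length_of_notMem_edges _ hadj.ne fun h => he (w.edges_takeUntil_subset_edges hy h)
  have hlen := congrArg length (w.take_spec hy)
  rw [length_append] at hlen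
  refine ⟨cons hadj (w.dropUntil y hy), by simp; omega, fun z hz => ?_⟩
  rw [support_cons, List.mem_cons] at hz
  rcases hz with rfl | hz
  exacts [w.start_mem_support, w.support_dropUntil_subset_support hy hz]

theorem exists_shorter_of_chord :
    ∀ {u v : V} (w : G.Walk u v), G.Adj x y → x ∈ w.support → y ∈ w.support → s(x, y) ∉ w.edges →
      ∃ w' : G.Walk u v, w'.length < w.length ∧ ∀ z ∈ w'.support, z ∈ w.support
  | _, _, .nil, hxy, hx, hy, _ => by
    simp only [support_nil, List.mem_singleton] at hx hy
    exact absurd (hx.trans hy.symm) hxy.ne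
  | _, _, .cons hadj p, hxy, hx, hy, he => by
    rcases List.mem_cons.1 hx with rfl | hxp
    · exact exists_shorter_of_chord_from_start _ hxy hy he
    rcases List.mem_cons.1 hy with rfl | hyp
    · exact exists_shorter_of_chord_from_start _ hxy.symm hx (Sym2.eq_swap ▸ he)
    obtain ⟨p', hlt, hsub⟩ := p.exists_shorter_of_chord hxy hxp hyp (fun h => he (by simp [h]))
    exact ⟨cons hadj p', by simpa using hlt, fun z hz => by
      rcases List.mem_cons.1 hz with rfl | hz
      exacts [by simp, by simp [hsub z hz]]⟩

end Walk

theorem ReachableIn.exists_chordless_path (h : G.ReachableIn U u v) :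
    ∃ p : G.Walk u v, p.IsPath ∧ (∀ z ∈ p.support, z ∈ U) ∧
      ∀ x ∈ p.support, ∀ y ∈ p.support, G.Adj x y → s(x, y) ∈ p.edges := by
  obtain ⟨w, hwU, hmin⟩ := (measure fun w : G.Walk u v => w.length).wf.has_min
    {w | ∀ z ∈ w.support, z ∈ U} h
  have hbU : ∀ z ∈ w.bypass.support, z ∈ U :=
    fun z hz => hwU z (w.support_bypass_subset_support hz)
  refine ⟨w.bypass, w.bypass_isPath, hbU, fun x hx y hy hxy => by_contra fun he => ?_⟩
  obtain ⟨w', hlt, hsub⟩ := w.bypass.exists_shorter_of_chord hxy hx hy he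
  exact hmin w' (fun z hz => hbU z (hsub z hz)) (lt_of_lt_of_le hlt w.length_bypass_le_length)

theorem IsChordal.adj_of_reachableIn_of_reachableIn (hG : G.IsChordal) {A B : Set V}
    (hAB : Disjoint A B) (hAB' : ∀ x ∈ A, ∀ y ∈ B, ¬G.Adj x y) (huv : u ≠ v)
    (hA : G.ReachableIn (insert u (insert v A)) u v)
    (hB : G.ReachableIn (insert u (insert v B)) u v) : G.Adj u v := by
  by_contra hnadj
  obtain ⟨p, hp, hpA, hpc⟩ := hA.exists_chordless_path
  obtain ⟨q, hq, hqB, hqc⟩ := hB.exists_chordless_path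
  have hA' : ∀ z ∈ p.support, z ∉ q.support → z ∈ A := fun z hzp hzq => by
    rcases hpA z hzp with rfl | rfl | hz
    exacts [absurd q.start_mem_support hzq, absurd q.end_mem_support hzq, hz]
  have hB' : ∀ z ∈ q.support, z ∉ p.support → z ∈ B := fun z hzq hzp => by
    rcases hqB z hzq with rfl | rfl | hz
    exacts [absurd p.start_mem_support hzp, absurd p.end_mem_support hzp, hz]
  have hcommon : ∀ z ∈ p.support, z ∈ q.support → z = u ∨ z = v := fun z hzp hzq => by
    rcases hpA z hzp with rfl | rfl | hzA
    · exact .inl rfl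
    · exact .inr rfl
    rcases hqB z hzq with rfl | rfl | hzB
    exacts [.inl rfl, .inr rfl, absurd hzB (hAB.notMem_of_mem_left hzA)]
  have hp2 : 1 < p.length :=
    p.one_lt_length_of_notMem_edges huv fun h => hnadj (p.adj_of_mem_edges h)
  have hq2 : 1 < q.length :=
    q.one_lt_length_of_notMem_edges huv fun h => hnadj (q.adj_of_mem_edges h)
  have hcyc : (p.append q.reverse).IsCycle := by
    refine hp.isCycle_append hq.reverse (fun z hzp hzq => ?_) (.inl hp2)
    have hzu : z ≠ u := by rintro rfl; exact hp.start_notMem_support_tail hzp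
    have hzv : z ≠ v := by rintro rfl; exact hq.reverse.start_notMem_support_tail hzq
    have hzq' : z ∈ q.support := by simpa using List.mem_of_mem_tail hzq
    exact (hcommon z (List.mem_of_mem_tail hzp) hzq').elim hzu hzv
  obtain ⟨x, y, hxy, hx, hy, he⟩ := hG _ hcyc (by simp; omega)
  simp only [Walk.mem_support_append_iff, Walk.support_reverse, List.mem_reverse] at hx hy
  simp only [Walk.edges_append, Walk.edges_reverse, List.mem_append, List.mem_reverse,
    not_or] at he
  -- A chord would join two vertices of one of the chordless paths, or a vertex of `A` to one of `B`.
  by_cases hxp : x ∈ p.support <;> by_cases hyp : y ∈ p.support <;>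
    by_cases hxq : x ∈ q.support <;> by_cases hyq : y ∈ q.support <;>
    first
    | exact he.1 (hpc x hxp y hyp hxy)
    | exact he.2 (hqc x hxq y hyq hxy)
    | exact hAB' x (hA' x hxp hxq) y (hB' y hyq hyp) hxy
    | exact hAB' y (hA' y hyp hyq) x (hB' x hxq hxp) hxy.symm
    | tauto

def Separates (G : SimpleGraph V) (S : Set V) (a b : V) : Prop :=
  a ∉ S ∧ b ∉ S ∧ ¬G.ReachableIn Sᶜ a b

theorem Separates.symm (h : G.Separates S a b) : G.Separates S b a :=
  ⟨h.2.1, h.1, fun h' => h.2.2 h'.symm⟩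

theorem Separates.ne_and_not_adj (h : G.Separates S a b) (hax : G.ReachableIn Sᶜ a x)
    (hby : G.ReachableIn Sᶜ b y) : x ≠ y ∧ ¬G.Adj x y :=
  ⟨fun hxy => h.2.2 (hax.trans (hxy ▸ hby.symm)),
    fun hxy => h.2.2 ((hax.trans (hxy.reachableIn hax.mem_right hby.mem_right)).trans hby.symm)⟩

theorem minimal_separates_comm :
    Minimal (G.Separates · a b) S ↔ Minimal (G.Separates · b a) S := by
  have : (G.Separates · a b) = (G.Separates · b a) :=
    funext fun _ => propext ⟨Separates.symm, Separates.symm⟩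
  rw [this]

theorem exists_minimal_separates [Finite V] (hab : a ≠ b) (h : ¬G.Adj a b) :
    ∃ S, Minimal (G.Separates · a b) S :=
  exists_minimal_of_wellFoundedLT _ ⟨{a, b}ᶜ, by simp, by simp, by
    simpa only [compl_compl] using not_reachableIn_pair hab h⟩

theorem exists_adj_reachableIn_of_minimal_separates {s : V}
    (hS : Minimal (G.Separates · a b) S) (hs : s ∈ S) :
    ∃ x, G.Adj s x ∧ G.ReachableIn Sᶜ a x := by
  have hnot : ¬G.Separates (S \ {s}) a b := fun h => (hS.2 h Set.sdiff_subset hs).2 rfl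
  obtain ⟨w, hw⟩ : G.ReachableIn (S \ {s})ᶜ a b := by
    by_contra h'
    exact hnot ⟨fun h => hS.1.1 h.1, fun h => hS.1.2.1 h.1, h'⟩
  have hw' : ∀ z ∈ w.support, z ∈ insert s Sᶜ := fun z hz => by
    by_cases hzs : z = s
    exacts [.inl hzs, .inr fun hzS => hw z hz ⟨hzS, hzs⟩]
  have hsw : s ∈ w.support := by
    by_contra hsw
    exact hS.1.2.2 ⟨w, fun z hz => (hw' z hz).resolve_left fun h => hsw (h ▸ hz)⟩
  exact w.exists_adj_reachableIn hw' hsw (fun h => hS.1.1 (h ▸ hs))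

theorem IsChordal.isClique_of_minimal_separates (hG : G.IsChordal)
    (hS : Minimal (G.Separates · a b) S) : G.IsClique S := by
  intro u hu v hv huv
  have route : ∀ {c d : V}, Minimal (G.Separates · c d) S →
      G.ReachableIn (insert u (insert v {z | G.ReachableIn Sᶜ c z})) u v := by
    intro c d hcd
    obtain ⟨x, hux, hcx⟩ := exists_adj_reachableIn_of_minimal_separates hcd hu
    obtain ⟨y, hvy, hcy⟩ := exists_adj_reachableIn_of_minimal_separates hcd hv
    have hxy := (hcx.symm.trans hcy).reachableIn_setOf_reachableIn hcx
    refine (hux.reachableIn (by simp) (by simp [hcx])).trans ((hxy.mono ?_).trans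
      (hvy.symm.reachableIn (by simp [hcy]) (by simp)))
    exact fun z hz => .inr (.inr hz)
  exact hG.adj_of_reachableIn_of_reachableIn
    (Set.disjoint_left.2 fun x hax hbx => (hS.1.ne_and_not_adj hax hbx).1 rfl)
    (fun x hax y hby => (hS.1.ne_and_not_adj hax hby).2) huv
    (route hS) (route (minimal_separates_comm.1 hS))

theorem IsChordal.induce (hG : G.IsChordal) (W : Set V) : (G.induce W).IsChordal := by
  intro v w hw hlen
  obtain ⟨a, b, hab, ha, hb, he⟩ :=
    hG (w.map (Embedding.induce W).toHom) (hw.map Subtype.val_injective)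
      (by rwa [Walk.length_map])
  simp only [Walk.support_map, List.mem_map] at ha hb
  obtain ⟨a, ha, rfl⟩ := ha
  obtain ⟨b, hb, rfl⟩ := hb
  refine ⟨a, b, hab, ha, hb, fun h => he ?_⟩
  rw [Walk.edges_map]
  exact List.mem_map_of_mem h

theorem IsSimplicial.of_induce {W : Set V} {x : W} (hx : G.neighborSet x ⊆ W)
    (h : (G.induce W).IsSimplicial x) : G.IsSimplicial x := by
  intro p hp q hq hpq
  exact @h ⟨p, hx hp⟩ hp ⟨q, hx hq⟩ hq (by simpa using hpq)

theorem exists_isSimplicial_of_induce {W : Set V} (hS : G.IsClique S)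
    (hW : ∀ x ∈ W, x ∉ S → G.neighborSet x ⊆ W) {c : V} (hcW : c ∈ W) (hcS : c ∉ S)
    (hind : G.induce W = ⊤ ∨ ∃ x y : W, x ≠ y ∧ ¬(G.induce W).Adj x y ∧
      (G.induce W).IsSimplicial x ∧ (G.induce W).IsSimplicial y) :
    ∃ x ∈ W, x ∉ S ∧ G.IsSimplicial x := by
  rcases hind with htop | ⟨x, y, hxy, hnadj, hx, hy⟩
  · exact ⟨c, hcW, hcS, (induce_eq_top.1 htop).subset (hW c hcW hcS)⟩
  by_cases hxS : x.1 ∈ S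
  · have hyS : y.1 ∉ S := fun hyS => hnadj (hS hxS hyS (Subtype.val_injective.ne hxy))
    exact ⟨y, y.2, hyS, hy.of_induce (hW y y.2 hyS)⟩
  · exact ⟨x, x.2, hxS, hx.of_induce (hW x x.2 hxS)⟩

theorem IsChordal.exists_nonadj_simplicial [Finite V] (hG : G.IsChordal) (hG' : G ≠ ⊤) :
    ∃ x y : V, x ≠ y ∧ ¬G.Adj x y ∧ G.IsSimplicial x ∧ G.IsSimplicial y := by
  induction hn : Nat.card V using Nat.strong_induction_on generalizing V with
  | _ n ih =>
  obtain ⟨a, b, hab, hnadj⟩ : ∃ a b : V, a ≠ b ∧ ¬G.Adj a b := by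
    by_contra! h
    exact hG' (eq_top_iff.2 fun x y hxy => h x y hxy)
  obtain ⟨S, hS⟩ := exists_minimal_separates hab hnadj
  have hclique := hG.isClique_of_minimal_separates hS
  have side : ∀ {c d : V}, Minimal (G.Separates · c d) S →
      ∃ x, G.ReachableIn Sᶜ c x ∧ G.IsSimplicial x := by
    intro c d hcd
    set W := {z | G.ReachableIn Sᶜ c z} ∪ S
    have hcard : Nat.card W < n := hn ▸ Finite.card_subtype_lt (x := d) fun hd =>
      hd.elim (hcd.1.2.2 ·) hcd.1.2.1
    have hclosed : ∀ x ∈ W, x ∉ S → G.neighborSet x ⊆ W := fun x hx hxS y hxy => by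
      have hcx := hx.resolve_right hxS
      by_cases hyS : y ∈ S
      exacts [.inr hyS, .inl (hcx.trans (hxy.reachableIn hcx.mem_right hyS))]
    have hind : G.induce W = ⊤ ∨ _ := (em _).imp_right (ih _ hcard (hG.induce W) · rfl)
    obtain ⟨x, hxW, hxS, hx⟩ :=
      exists_isSimplicial_of_induce hclique hclosed (.inl (.refl hcd.1.1)) hcd.1.1 hind
    exact ⟨x, hxW.resolve_right hxS, hx⟩
  obtain ⟨x, hax, hx⟩ := side hS
  obtain ⟨y, hby, hy⟩ := side (minimal_separates_comm.1 hS)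
  exact ⟨x, y, (hS.1.ne_and_not_adj hax hby).1, (hS.1.ne_and_not_adj hax hby).2, hx, hy⟩

end SimpleGraph

/-- Every noncomplete chordal graph has two nonadjacent simplicial vertices. -/
theorem stmt_0 {V : Type*} [Fintype V] (G : SimpleGraph V)
    (hchordal : G.IsChordal) (hnc : G ≠ ⊤) :
    ∃ x y : V, x ≠ y ∧ ¬ G.Adj x y ∧ G.IsSimplicial x ∧ G.IsSimplicial y :=
  hchordal.exists_nonadj_simplicial hnc
end

section
/- Let G be a chordal graph and let x be a vertex of G that is nondominating, i.e., x is not adjacent to every other vertex of G. Then there exists a vertex y of G such that y is not adjacent to x, y ≠ x, and the graph obtained from G by adding the edge xy is also chordal. -/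
/-!
Let `z` be a non-neighbour of `x`, let `C` be the component of `z` in `G` minus the closed
neighbourhood of `x`, and let `S` be the set of neighbours of `x` that have a neighbour in `C`.
Any two vertices of `S` are adjacent: otherwise a chordless path between them through `C`,
closed up by `x`, is a chordless cycle of length at least four. A vertex `y ∈ C` with a maximal
set of neighbours in `S` is adjacent to all of `S`, because in a chordal graph a vertex adjacent
to both ends of a chordless path is adjacent to all of it. Then `G + xy` is chordal: a chordless
cycle through `xy` would be a chordless `x`-`y` path in `G` of length at least three, but such a
path enters `C` from some `s ∈ S`, and `s` is adjacent to both `x` and `y`.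
-/

open scoped Classical

namespace SimpleGraph

variable {V : Type*} {G H : SimpleGraph V}

namespace Walk

variable {u v w x a b : V}

lemma IsPath.eq_of_mem_support_of_mem_support {p : G.Walk u v} {q : G.Walk v w}
    (hpq : (p.append q).IsPath) (hp : x ∈ p.support) (hq : x ∈ q.support) : x = v := by
  by_contra hxv
  exact hpq.ne_of_mem_support_of_append hxv hp hq rfl

lemma IsChordless.of_isSubwalk {u' v' : V} {p : G.Walk u v} {q : G.Walk u' v'}
    (hpq : p.IsSubwalk q) (hq : q.IsPath) (hc : q.IsChordless) : p.IsChordless := by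
  obtain ⟨r₁, r₂, rfl⟩ := hpq
  refine isChordless_iff_forall_mem_edges.mpr fun a b ha hb hab => ?_
  have hedge := hc.mem_edges (by simp [ha]) (by simp [hb]) hab
  simp only [edges_append, List.mem_append] at hedge
  rcases hedge with (h | h) | h
  · have hpath := hq.of_append_left
    have hau := hpath.eq_of_mem_support_of_mem_support (r₁.fst_mem_support_of_mem_edges h) ha
    have hbu := hpath.eq_of_mem_support_of_mem_support (r₁.snd_mem_support_of_mem_edges h) hb
    exact absurd (hau.trans hbu.symm) hab.ne
  · exact h
  · have hav := hq.eq_of_mem_support_of_mem_support (by simp [ha])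
      (r₂.fst_mem_support_of_mem_edges h)
    have hbv := hq.eq_of_mem_support_of_mem_support (by simp [hb])
      (r₂.snd_mem_support_of_mem_edges h)
    exact absurd (hav.trans hbv.symm) hab.ne

lemma IsChordless.reverse {p : G.Walk u v} (hc : p.IsChordless) : p.reverse.IsChordless := by
  rw [isChordless_iff_forall_mem_edges] at hc ⊢
  simpa [edges_reverse, support_reverse] using hc

lemma IsChordless.rotate {c : G.Walk v v} (hc : c.IsChordless) (h : u ∈ c.support) :
    (c.rotate u h).IsChordless := by
  rw [isChordless_iff_forall_mem_edges] at hc ⊢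
  intro a b ha hb hab
  rw [(c.rotate_edges u h).mem_iff]
  exact hc (by simpa using ha) (by simpa using hb) hab

lemma IsChordless.transfer {p : G.Walk u v} (hc : p.IsChordless) (hHG : H ≤ G)
    (hp : ∀ e ∈ p.edges, e ∈ H.edgeSet) : (p.transfer H hp).IsChordless := by
  rw [isChordless_iff_forall_mem_edges] at hc ⊢
  simp only [support_transfer, edges_transfer]
  exact fun a b ha hb hab => hc ha hb (hHG hab)

lemma exists_length_lt_of_not_isChordless {p : G.Walk u v} (hp : ¬ p.IsChordless) :
    ∃ q : G.Walk u v, q.support ⊆ p.support ∧ q.length < p.length := by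
  have shortcut : ∀ {a b : V} (p₁ : G.Walk u a) (p₂ : G.Walk a b) (p₃ : G.Walk b v),
      G.Adj a b → s(a, b) ∉ p₂.edges → ∃ q : G.Walk u v,
        q.support ⊆ (p₁.append (p₂.append p₃)).support ∧
          q.length < (p₁.append (p₂.append p₃)).length := by
    intro a b p₁ p₂ p₃ hab hp₂
    have hlen : 2 ≤ p₂.length := by
      cases p₂ with
      | nil => exact absurd rfl hab.ne
      | cons _ p₂' => cases p₂' <;> simp_all
    refine ⟨p₁.append (cons hab p₃), fun z hz => ?_, by simp; omega⟩
    simp only [mem_support_append_iff, support_cons, List.mem_cons] at hz ⊢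
    rcases hz with hz | rfl | hz
    · exact Or.inl hz
    · exact Or.inl p₁.end_mem_support
    · exact Or.inr (Or.inr hz)
  rw [isChordless_iff_forall_mem_edges] at hp
  push Not at hp
  obtain ⟨a, b, ha, hb, hab, hnot⟩ := hp
  obtain ⟨p₁, p₂, rfl⟩ := mem_support_iff_exists_append.mp ha
  rcases (mem_support_append_iff _ _).mp hb with hb | hb
  · obtain ⟨q₁, q₂, rfl⟩ := mem_support_iff_exists_append.mp hb
    rw [← append_assoc]
    refine shortcut q₁ q₂ p₂ hab.symm fun h => hnot ?_
    rw [Sym2.eq_swap] at h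
    simp [h]
  · obtain ⟨q₁, q₂, rfl⟩ := mem_support_iff_exists_append.mp hb
    exact shortcut p₁ q₁ q₂ hab fun h => hnot (by simp [h])

theorem exists_isPath_isChordless_support_subset (p : G.Walk u v) :
    ∃ q : G.Walk u v, q.IsPath ∧ q.IsChordless ∧ q.support ⊆ p.support := by
  induction hn : p.length using Nat.strong_induction_on generalizing p with
  | _ n ih =>
    by_cases hc : p.bypass.IsChordless
    · exact ⟨p.bypass, p.bypass_isPath, hc, p.support_bypass_subset_support⟩
    · obtain ⟨q, hsub, hlt⟩ := exists_length_lt_of_not_isChordless hc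
      obtain ⟨r, hr, hrc, hrq⟩ := ih _ (hn ▸ hlt.trans_le p.length_bypass_le_length) q rfl
      exact ⟨r, hr, hrc,
        List.Subset.trans hrq (List.Subset.trans hsub p.support_bypass_subset_support)⟩

lemma IsPath.length_le_two_of_isChordless {p : G.Walk u v} (hp : p.IsPath)
    (hc : p.IsChordless) (ha : a ∈ p.support) (hua : G.Adj u a) (hav : G.Adj a v) :
    p.length ≤ 2 := by
  have hsnd : a = p.snd := hp.eq_snd_of_mem_edges (hc.mem_edges p.start_mem_support ha hua)
  have hpen : a = p.penultimate :=
    hp.eq_penultimate_of_mem_edges (hc.mem_edges p.end_mem_support ha hav.symm)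
  by_contra! hlen
  have := hp.getVert_injOn (show 1 ≤ p.length by omega) (show p.length - 1 ≤ p.length by omega)
    (hsnd.symm.trans hpen)
  omega

lemma IsCycle.exists_cons_of_mem_edges {c : G.Walk u u} (hc : c.IsCycle)
    (h : s(u, v) ∈ c.edges) :
    ∃ (huv : G.Adj u v) (p : G.Walk v u), c = cons huv p ∨ c.reverse = cons huv p := by
  obtain ⟨b, hb, q, rfl⟩ := not_nil_iff.mp hc.not_nil
  rw [edges_cons, List.mem_cons] at h
  rcases h with h | h
  · obtain rfl : v = b := by
      rcases Sym2.eq_iff.mp h with ⟨-, h⟩ | ⟨rfl, -⟩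
      · exact h
      · exact absurd rfl hb.ne
    exact ⟨hb, q, Or.inl rfl⟩
  · have hq : q.reverse.IsPath := ((cons_isCycle_iff q hb).mp hc).1.reverse
    obtain ⟨b', hb', r, hr⟩ := not_nil_iff.mp (q.reverse.not_nil_of_ne hb.ne)
    obtain rfl : v = b' := by
      have := hq.eq_snd_of_mem_edges (by simpa using h)
      simpa [hr] using this
    exact ⟨hb', r.append (cons hb.symm nil), Or.inr (by rw [reverse_cons, hr, cons_append])⟩

end Walk

variable {u v x y t : V}

open Walk

lemma isChordal_iff_forall_isChordless : G.IsChordal ↔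
    ∀ ⦃v : V⦄ (c : G.Walk v v), c.IsCycle → c.IsChordless → c.length ≤ 3 := by
  simp only [IsChordal, isChordless_iff_forall_mem_edges]
  refine forall_congr' fun v => forall_congr' fun c => forall_congr' fun _ => ?_
  constructor
  · intro h hc
    by_contra! hlen
    obtain ⟨a, b, hab, ha, hb, hnot⟩ := h hlen
    exact hnot (hc ha hb hab)
  · intro h hlen
    by_contra! hc
    exact hlen.not_ge (h fun a b ha hb hab => hc a b hab ha hb)

namespace IsChordal

lemma exists_adj_of_isChordless (hG : G.IsChordal) {p : G.Walk u v} (hp : p.IsPath)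
    (hc : p.IsChordless) (hlen : 2 ≤ p.length) (ht : t ∉ p.support) (htu : G.Adj t u)
    (htv : G.Adj t v) : ∃ b ∈ p.support, b ≠ u ∧ b ≠ v ∧ G.Adj t b := by
  by_contra! hno
  have huv : u ≠ v := by
    rintro rfl
    simp [length_eq_zero_iff.mpr (isPath_iff_nil.mp hp)] at hlen
  -- `t` closes `p` into a cycle of length at least four, whose only candidate chords join `t`
  -- to an inner vertex of `p`.
  set c := cons htu (p.concat htv.symm)
  have hcyc : c.IsCycle := by
    refine (cons_isCycle_iff _ _).mpr ⟨hp.concat ht _, fun h => ?_⟩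
    simp only [edges_concat, List.concat_eq_append, List.mem_append, List.mem_singleton] at h
    rcases h with h | h
    · exact ht (p.fst_mem_support_of_mem_edges h)
    · rcases Sym2.eq_iff.mp h with ⟨rfl, -⟩ | ⟨-, rfl⟩
      · exact htv.ne rfl
      · exact huv rfl
  refine (isChordal_iff_forall_isChordless.mp hG c hcyc ?_).not_gt (by simp [c]; omega)
  have hsupp : ∀ z ∈ c.support, z = t ∨ z ∈ p.support := by
    simp only [c, support_cons, support_concat, List.mem_cons, List.mem_append]
    tauto
  have htu' : s(t, u) ∈ c.edges := by simp [c]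
  have htv' : s(t, v) ∈ c.edges := by simp [c, Sym2.eq_swap]
  have hpc : p.edges ⊆ c.edges := by simp [c]
  have hend : ∀ z ∈ p.support, G.Adj t z → s(t, z) ∈ c.edges := by
    intro z hz htz
    by_cases hzu : z = u
    · exact hzu ▸ htu'
    by_cases hzv : z = v
    · exact hzv ▸ htv'
    exact absurd htz (hno z hz hzu hzv)
  rw [isChordless_iff_forall_mem_edges]
  intro a b ha hb hab
  rcases hsupp a ha with rfl | hap <;> rcases hsupp b hb with rfl | hbp
  · exact absurd rfl hab.ne
  · exact hend b hbp hab
  · exact Sym2.eq_swap ▸ hend a hap hab.symm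
  · exact hpc (hc.mem_edges hap hbp hab)

lemma adj_of_mem_support (hG : G.IsChordal) {p : G.Walk u v} (hp : p.IsPath)
    (hc : p.IsChordless) (ht : t ∉ p.support) (htu : G.Adj t u) (htv : G.Adj t v) {a : V}
    (ha : a ∈ p.support) : G.Adj t a := by
  induction hn : p.length using Nat.strong_induction_on generalizing u v p with
  | _ n ih =>
    by_cases hau : a = u
    · exact hau ▸ htu
    by_cases hav : a = v
    · exact hav ▸ htv
    have hlen : 2 ≤ p.length := by
      have := congrArg length (p.take_spec ha)
      have := length_takeUntil_lt_length ha hav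
      have := length_dropUntil_lt_length ha hau
      simp only [length_append] at *
      omega
    obtain ⟨b, hb, hbu, hbv, htb⟩ := hG.exists_adj_of_isChordless hp hc hlen ht htu htv
    rw [← p.take_spec hb, mem_support_append_iff] at ha
    rcases ha with ha | ha
    · exact ih _ (hn ▸ length_takeUntil_lt_length hb hbv) (hp.takeUntil hb)
        (hc.of_isSubwalk (p.isSubwalk_takeUntil hb) hp)
        (fun h => ht (p.support_takeUntil_subset_support hb h)) htu htb ha rfl
    · exact ih _ (hn ▸ length_dropUntil_lt_length hb hbu) (hp.dropUntil hb)
        (hc.of_isSubwalk (p.isSubwalk_dropUntil hb) hp)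
        (fun h => ht (p.support_dropUntil_subset_support hb h)) htb htv ha rfl

lemma sup_edge (hG : G.IsChordal) (hxy : ¬ G.Adj x y)
    (h : ∀ p : G.Walk x y, p.IsPath → p.IsChordless → p.length ≤ 2) :
    (G ⊔ edge x y).IsChordal := by
  rw [isChordal_iff_forall_isChordless]
  intro v c hc hcc
  have hedge : ∀ e ∈ (G ⊔ edge x y).edgeSet, e ≠ s(x, y) → e ∈ G.edgeSet := by
    intro e he hne
    simp only [edge, edgeSet_sup, edgeSet_fromEdgeSet, Set.mem_union, Set.mem_sdiff,
      Set.mem_singleton_iff] at he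
    tauto
  by_cases hxyc : s(x, y) ∈ c.edges
  · have hx : x ∈ c.support := c.fst_mem_support_of_mem_edges hxyc
    -- Based at `x` and oriented along `xy`, the cycle is `xy` followed by a `y`-`x` path of `G`.
    obtain ⟨hxy', p, hp⟩ := (hc.rotate hx).exists_cons_of_mem_edges
      ((c.rotate_edges x hx).mem_iff.mpr hxyc)
    obtain ⟨hcyc, hchl, hlen⟩ : (cons hxy' p).IsCycle ∧ (cons hxy' p).IsChordless ∧
        (cons hxy' p).length = c.length := by
      rcases hp with hp | hp <;> rw [← hp]
      · exact ⟨hc.rotate hx, hcc.rotate hx, length_rotate ..⟩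
      · exact ⟨(hc.rotate hx).reverse, (hcc.rotate hx).reverse, by simp⟩
    obtain ⟨hpp, hpxy⟩ := (cons_isCycle_iff _ _).mp hcyc
    have hpG : ∀ e ∈ p.edges, e ∈ G.edgeSet := fun e he =>
      hedge e (p.edges_subset_edgeSet he) (by rintro rfl; exact hpxy he)
    have hq : (p.transfer G hpG).IsChordless := by
      rw [isChordless_iff_forall_mem_edges]
      simp only [support_transfer, edges_transfer]
      intro a b ha hb hab
      have := hchl.mem_edges (by simp [ha]) (by simp [hb]) (Or.inl hab : (G ⊔ _).Adj a b)
      rw [edges_cons, List.mem_cons] at this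
      refine this.resolve_left fun h => hxy ?_
      rcases Sym2.eq_iff.mp h with ⟨rfl, rfl⟩ | ⟨rfl, rfl⟩
      exacts [hab, hab.symm]
    have := h _ (hpp.transfer hpG).reverse hq.reverse
    simp only [length_reverse, length_transfer, length_cons] at this hlen
    omega
  · have hcG : ∀ e ∈ c.edges, e ∈ G.edgeSet := fun e he =>
      hedge e (c.edges_subset_edgeSet he) (by rintro rfl; exact hxyc he)
    exact length_transfer c hcG ▸
      isChordal_iff_forall_isChordless.mp hG _ (hc.transfer hcG) (hcc.transfer le_sup_left hcG)

end IsChordal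

lemma exists_component_of_not_adj {z : V} (hzx : z ≠ x) (hxz : ¬ G.Adj x z) :
    ∃ C : Set V, z ∈ C ∧ (∀ c ∈ C, c ≠ x ∧ ¬ G.Adj x c) ∧
      (∀ c ∈ C, ∀ b, G.Adj c b → b ∈ C ∨ G.Adj x b) ∧
      ∀ c ∈ C, ∀ c' ∈ C, ∃ w : G.Walk c c', ∀ a ∈ w.support, a ∈ C := by
  -- the component of `z` in `G` minus the closed neighbourhood of `x`
  set C := {c | ∃ w : G.Walk z c, ∀ a ∈ w.support, a ≠ x ∧ ¬ G.Adj x a}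
  have hmem : ∀ c (w : G.Walk z c), (∀ a ∈ w.support, a ≠ x ∧ ¬ G.Adj x a) →
      ∀ a ∈ w.support, a ∈ C := fun c w hw a ha =>
    ⟨w.takeUntil a ha, fun b hb => hw b (w.support_takeUntil_subset_support ha hb)⟩
  refine ⟨C, ⟨Walk.nil, by simpa using ⟨hzx, hxz⟩⟩, ?_, ?_, ?_⟩
  · rintro c ⟨w, hw⟩
    exact hw c w.end_mem_support
  · rintro c ⟨w, hw⟩ b hcb
    by_cases hbx : b = x
    · exact absurd (hbx ▸ hcb.symm) (hw c w.end_mem_support).2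
    by_cases hxb : G.Adj x b
    · exact Or.inr hxb
    refine Or.inl ⟨w.concat hcb, fun a ha => ?_⟩
    rw [support_concat, List.mem_append, List.mem_singleton] at ha
    rcases ha with ha | rfl
    exacts [hw a ha, ⟨hbx, hxb⟩]
  · rintro c ⟨w, hw⟩ c' ⟨w', hw'⟩
    refine ⟨w.reverse.append w', fun a ha => ?_⟩
    rw [mem_support_append_iff, support_reverse, List.mem_reverse] at ha
    rcases ha with ha | ha
    exacts [hmem _ w hw a ha, hmem _ w' hw' a ha]

lemma Walk.IsPath.length_le_two_of_forall_adj {C : Set V} (hxC : x ∉ C)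
    (hC : ∀ c ∈ C, ∀ b, G.Adj c b → b ∈ C ∨ G.Adj x b) (hyC : y ∈ C)
    (hy : ∀ s, G.Adj x s → (∃ c ∈ C, G.Adj s c) → G.Adj s y) {p : G.Walk x y}
    (hp : p.IsPath) (hc : p.IsChordless) : p.length ≤ 2 := by
  obtain ⟨d, hd, hdC, hdC'⟩ := p.exists_boundary_dart Cᶜ hxC (by simpa using hyC)
  rw [Set.mem_compl_iff, not_not] at hdC'
  have hxd : G.Adj x d.fst := (hC _ hdC' _ d.adj.symm).resolve_left hdC
  exact hp.length_le_two_of_isChordless hc (p.dart_fst_mem_support_of_mem_darts hd) hxd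
    (hy _ hxd ⟨_, hdC', d.adj⟩)

namespace IsChordal

variable {C : Set V}

lemma isClique_neighborSet_inter (hG : G.IsChordal) (hCx : ∀ c ∈ C, c ≠ x ∧ ¬ G.Adj x c)
    (hCconn : ∀ c ∈ C, ∀ c' ∈ C, ∃ w : G.Walk c c', ∀ a ∈ w.support, a ∈ C) :
    G.IsClique {s | G.Adj x s ∧ ∃ c ∈ C, G.Adj s c} := by
  rintro s ⟨hxs, c, hc, hsc⟩ t ⟨hxt, c', hc', htc'⟩ hst
  obtain ⟨w, hw⟩ := hCconn c hc c' hc'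
  obtain ⟨p, hp, hpc, hps⟩ :=
    exists_isPath_isChordless_support_subset (cons hsc (w.concat htc'.symm))
  have hsupp : ∀ a ∈ p.support, a = s ∨ a = t ∨ a ∈ C := by
    intro a ha
    have := hps ha
    simp only [support_cons, support_concat, List.mem_cons, List.mem_append,
      List.not_mem_nil, or_false] at this
    rcases this with h | h | h
    exacts [Or.inl h, Or.inr (Or.inr (hw a h)), Or.inr (Or.inl h)]
  by_contra hnadj
  have hlen : 2 ≤ p.length := by
    by_contra! hlen
    interval_cases h : p.length
    · exact hst (eq_of_length_eq_zero h)
    · exact hnadj (adj_of_length_eq_one h)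
  have hx : x ∉ p.support := fun hx => by
    rcases hsupp x hx with rfl | rfl | hxC
    exacts [hxs.ne rfl, hxt.ne rfl, (hCx x hxC).1 rfl]
  obtain ⟨b, hb, hbs, hbt, hxb⟩ := hG.exists_adj_of_isChordless hp hpc hlen hx hxs hxt
  rcases hsupp b hb with rfl | rfl | hbC
  exacts [hbs rfl, hbt rfl, (hCx b hbC).2 hxb]

lemma exists_mem_forall_adj [Finite V] (hG : G.IsChordal) (hC : C.Nonempty)
    (hCx : ∀ c ∈ C, c ≠ x ∧ ¬ G.Adj x c)
    (hCconn : ∀ c ∈ C, ∀ c' ∈ C, ∃ w : G.Walk c c', ∀ a ∈ w.support, a ∈ C) :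
    ∃ y ∈ C, ∀ s, G.Adj x s → (∃ c ∈ C, G.Adj s c) → G.Adj s y := by
  set S := {s | G.Adj x s ∧ ∃ c ∈ C, G.Adj s c}
  have hS : G.IsClique S := hG.isClique_neighborSet_inter hCx hCconn
  -- If `y` misses some `s ∈ S`, the second vertex of a chordless path from `s` to `y` through `C`
  -- sees strictly more of `S`.
  obtain ⟨y, hyC, hmax⟩ := C.toFinite.exists_maximalFor (fun y => {s ∈ S | G.Adj s y}) C hC
  refine ⟨y, hyC, fun s hxs hsC => ?_⟩
  by_contra hsy
  obtain ⟨c, hc, hsc⟩ := hsC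
  obtain ⟨w, hw⟩ := hCconn c hc y hyC
  obtain ⟨p, hp, hpc, hps⟩ := exists_isPath_isChordless_support_subset (cons hsc w)
  have hsupp : ∀ a ∈ p.support, a = s ∨ a ∈ C := by
    intro a ha
    have := hps ha
    rw [support_cons, List.mem_cons] at this
    exact this.imp_right (hw a)
  have hnil : ¬ p.Nil := p.not_nil_of_ne fun h => (hCx y hyC).2 (h ▸ hxs)
  have hsnd : p.snd ∈ C :=
    (hsupp _ (p.getVert_mem_support 1)).resolve_left (p.adj_snd hnil).ne.symm
  have hsub : {t ∈ S | G.Adj t y} ⊆ {t ∈ S | G.Adj t p.snd} := by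
    rintro t ⟨htS, hty⟩
    have hts : t ≠ s := by
      rintro rfl
      exact hsy hty
    have ht : t ∉ p.support := fun ht => (hsupp t ht).elim hts fun htC => (hCx t htC).2 htS.1
    exact ⟨htS, hG.adj_of_mem_support hp hpc ht (hS htS ⟨hxs, c, hc, hsc⟩ hts) hty
      (p.getVert_mem_support 1)⟩
  exact hsy (hmax hsnd hsub ⟨⟨hxs, c, hc, hsc⟩, p.adj_snd hnil⟩).2

end IsChordal

end SimpleGraph

/-- If `x` is a nondominating vertex of a chordal graph `G` (i.e. `x` is not adjacent to every
other vertex), then there is a vertex `y` nonadjacent to `x`, `y ≠ x`, such that the graph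
obtained from `G` by adding the edge `xy` is still chordal. -/
theorem stmt_1 {V : Type*} [Fintype V] (G : SimpleGraph V) (x : V)
    (hchordal : G.IsChordal) (hnd : ¬ ∀ z : V, z ≠ x → G.Adj x z) :
    ∃ y : V, y ≠ x ∧ ¬ G.Adj x y ∧
      (G ⊔ SimpleGraph.fromEdgeSet {s(x, y)}).IsChordal := by
  push Not at hnd
  obtain ⟨z, hzx, hxz⟩ := hnd
  obtain ⟨C, hzC, hCx, hCclosed, hCconn⟩ := SimpleGraph.exists_component_of_not_adj hzx hxz
  obtain ⟨y, hyC, hy⟩ := hchordal.exists_mem_forall_adj ⟨z, hzC⟩ hCx hCconn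
  refine ⟨y, (hCx y hyC).1, (hCx y hyC).2, hchordal.sup_edge (hCx y hyC).2 fun p hp hc => ?_⟩
  exact hp.length_le_two_of_forall_adj (fun hx => (hCx x hx).1 rfl) hCclosed hyC hy hc
end

section
/- Let G be a chordal graph, let x be a simplicial vertex of G, and let e be an edge of G incident with x. Then the graph G − e obtained from G by deleting the edge e is chordal. -/
open scoped Classical

/-!
Let `C` be a cycle of length at least four in `G - xy`. If `x` lies on `C`, its two neighbours
on `C` are adjacent, since `x` is still simplicial in `G - xy`, and the edge joining them is a
chord of `C` because `C` has length at least four. Otherwise `C` is also a cycle of `G`, and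
its chord in `G` cannot be `xy`, so it survives in `G - xy`.
-/

namespace SimpleGraph

variable {V : Type*} {G : SimpleGraph V}

lemma Walk.IsCycle.snd_penultimate_notMem_edges {x : V} {c : G.Walk x x} (hc : c.IsCycle)
    (hlen : 3 < c.length) : s(c.snd, c.penultimate) ∉ c.edges := by
  have hpath : c.tail.IsPath := ((cons_isCycle_iff _ _).mp (c.cons_tail_eq hc.not_nil ▸ hc)).1
  have hedges : c.edges = s(x, c.snd) :: c.tail.edges := by
    conv_lhs => rw [← c.cons_tail_eq hc.not_nil]
    rfl
  rw [hedges, List.mem_cons, not_or]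
  refine ⟨fun h => ?_, fun h => ?_⟩
  · grind [Sym2.eq_iff, (c.adj_snd hc.not_nil).ne, (c.adj_penultimate hc.not_nil).ne]
  · have hpen : c.penultimate = c.getVert 2 := by
      rw [hpath.eq_snd_of_mem_edges h, snd, getVert_tail]
    have := hc.getVert_injOn (by simp; omega) (by simp; omega) hpen
    omega

lemma IsSimplicial.exists_chord {x v : V} (hx : G.IsSimplicial x) {c : G.Walk v v}
    (hc : c.IsCycle) (hxc : x ∈ c.support) (hlen : 3 < c.length) :
    ∃ a b : V, G.Adj a b ∧ a ∈ c.support ∧ b ∈ c.support ∧ s(a, b) ∉ c.edges := by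
  set c' := c.rotate x hxc
  have hc' : c'.IsCycle := hc.rotate hxc
  have hlen' : 3 < c'.length := by simpa [c'] using hlen
  refine ⟨c'.snd, c'.penultimate, ?_, ?_, ?_, ?_⟩
  · exact hx (c'.adj_snd hc'.not_nil) (c'.adj_penultimate hc'.not_nil).symm
      hc'.snd_ne_penultimate
  · exact (c.mem_support_rotate_iff x hxc).mp (c'.getVert_mem_support _)
  · exact (c.mem_support_rotate_iff x hxc).mp (c'.getVert_mem_support _)
  · exact fun h => hc'.snd_penultimate_notMem_edges hlen' ((c.rotate_edges x hxc).mem_iff.mpr h)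

lemma IsSimplicial.deleteEdges {x : V} (hx : G.IsSimplicial x) (y : V) :
    (G.deleteEdges {s(x, y)}).IsSimplicial x := by
  intro u hu z hz huz
  simp only [mem_neighborSet, deleteEdges_adj, Set.mem_singleton_iff] at hu hz ⊢
  exact ⟨hx hu.1 hz.1 huz, by grind [Sym2.eq_iff, hu.1.ne, hz.1.ne]⟩

end SimpleGraph

theorem stmt_3_general {V : Type*} (G : SimpleGraph V) (x y : V)
    (hchordal : G.IsChordal) (hx : G.IsSimplicial x) :
    (G.deleteEdges {s(x, y)}).IsChordal := by
  intro v c hc hlen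
  by_cases hxc : x ∈ c.support
  · exact (hx.deleteEdges y).exists_chord hc hxc hlen
  obtain ⟨a, b, hab, ha, hb, hnot⟩ :=
    hchordal (c.mapLe (G.deleteEdges_le _)) (by simpa using hc) (by simpa using hlen)
  rw [SimpleGraph.Walk.support_mapLe_eq_support] at ha hb
  rw [SimpleGraph.Walk.edges_mapLe_eq_edges] at hnot
  refine ⟨a, b, SimpleGraph.deleteEdges_adj.mpr ⟨hab, ?_⟩, ha, hb, hnot⟩
  grind [Sym2.eq_iff]

/-- If `x` is a simplicial vertex of a chordal graph `G` and `e = xy` is an edge of `G`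
incident with `x`, then `G - e` is chordal. -/
theorem stmt_3 {V : Type*} (G : SimpleGraph V) (x y : V)
    (hchordal : G.IsChordal) (hx : G.IsSimplicial x) (he : G.Adj x y) :
    (G.deleteEdges {s(x, y)}).IsChordal :=
  stmt_3_general G x y hchordal hx
end

section
/- Let G be a chordal graph, let P be a chordless (induced) path in G of length at least 3 with endpoints x and z, and let y be a vertex of G not on P that is adjacent to both x and z. Then y is adjacent to every vertex of P. -/
open scoped Classical

/-!
Closing `P` through `y` gives a cycle of length `P.length + 2`. When `P` has length at least
two, chordality yields a chord of this cycle; since `P` is chordless, the chord joins `y` to an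
interior vertex `w` of `P`. Splitting `P` at `w` gives two shorter chordless paths whose
endpoints are both adjacent to `y`, and induction on the length finishes the proof.
-/

namespace SimpleGraph

variable {V : Type*} {G : SimpleGraph V}

namespace Walk

lemma IsPath.eq_of_mem_support_of_append {u v w x : V} {p : G.Walk u v} {q : G.Walk v w}
    (hpq : (p.append q).IsPath) (hp : x ∈ p.support) (hq : x ∈ q.support) : x = v := by
  by_contra hxv
  exact hpq.ne_of_mem_support_of_append hxv hp hq rfl

lemma IsChordless.of_append_left {u v w : V} {p : G.Walk u v} {q : G.Walk v w}
    (hpq : (p.append q).IsPath) (h : (p.append q).IsChordless) : p.IsChordless := by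
  refine isChordless_iff_forall_mem_edges.mpr fun a b ha hb hab => ?_
  have hmem := h.mem_edges (by simp [mem_support_append_iff, ha])
    (by simp [mem_support_append_iff, hb]) hab
  rw [edges_append, List.mem_append] at hmem
  refine hmem.resolve_right fun hq => hab.ne ?_
  rw [hpq.eq_of_mem_support_of_append ha (q.fst_mem_support_of_mem_edges hq),
    hpq.eq_of_mem_support_of_append hb (q.snd_mem_support_of_mem_edges hq)]

lemma IsChordless.of_append_right {u v w : V} {p : G.Walk u v} {q : G.Walk v w}
    (hpq : (p.append q).IsPath) (h : (p.append q).IsChordless) : q.IsChordless := by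
  refine isChordless_iff_forall_mem_edges.mpr fun a b ha hb hab => ?_
  have hmem := h.mem_edges (by simp [mem_support_append_iff, ha])
    (by simp [mem_support_append_iff, hb]) hab
  rw [edges_append, List.mem_append] at hmem
  refine hmem.resolve_left fun hp => hab.ne ?_
  rw [hpq.eq_of_mem_support_of_append (p.fst_mem_support_of_mem_edges hp) ha,
    hpq.eq_of_mem_support_of_append (p.snd_mem_support_of_mem_edges hp) hb]

lemma eq_or_eq_of_mem_support_of_length_le_one {u v x : V} {p : G.Walk u v}
    (hp : p.length ≤ 1) (hx : x ∈ p.support) : x = u ∨ x = v := by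
  cases p with
  | nil => simp_all
  | cons _ q =>
    cases q with
    | nil => simp_all
    | cons => simp at hp

lemma IsPath.isCycle_cons_concat {x z y : V} {p : G.Walk x z} (hp : p.IsPath) (hxz : x ≠ z)
    (hy : y ∉ p.support) (hyx : G.Adj y x) (hyz : G.Adj y z) :
    (cons hyx (p.concat hyz.symm)).IsCycle := by
  refine (cons_isCycle_iff _ _).mpr ⟨hp.concat hy _, fun h => ?_⟩
  rw [edges_concat, List.concat_eq_append, List.mem_append, List.mem_singleton,
    Sym2.eq_iff] at h
  rcases h with h | ⟨rfl, -⟩ | ⟨-, rfl⟩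
  · exact hy (p.fst_mem_support_of_mem_edges h)
  · exact hy p.end_mem_support
  · exact hxz rfl

end Walk

open Walk

lemma IsChordal.exists_adj_of_isChordless_s4 (hG : G.IsChordal) {x z y : V} {p : G.Walk x z}
    (hp : p.IsPath) (hc : p.IsChordless) (hlen : 2 ≤ p.length) (hy : y ∉ p.support)
    (hyx : G.Adj y x) (hyz : G.Adj y z) :
    ∃ w ∈ p.support, w ≠ x ∧ w ≠ z ∧ G.Adj y w := by
  have hxz : x ≠ z := by
    rintro rfl
    simp [(isPath_iff_nil.mp hp).length_eq_zero] at hlen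
  set C := cons hyx (p.concat hyz.symm) with hC
  have hC_edges : C.edges = s(y, x) :: (p.edges ++ [s(z, y)]) := by
    simp [hC, edges_concat]
  have hC_support (c : V) (hc : c ∈ C.support) : c = y ∨ c ∈ p.support := by
    simp only [hC, support_cons, support_concat, List.mem_cons, List.mem_append] at hc
    tauto
  obtain ⟨a, b, hab, ha, hb, hab_C⟩ :=
    hG C (hp.isCycle_cons_concat hxz hy hyx hyz) (by simp [hC]; omega)
  have hchord : ∃ w ∈ p.support, G.Adj y w ∧ s(y, w) ∉ C.edges := by
    rcases hC_support a ha with rfl | ha_p <;> rcases hC_support b hb with rfl | hb_p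
    · exact absurd rfl hab.ne
    · exact ⟨b, hb_p, hab, hab_C⟩
    · exact ⟨a, ha_p, hab.symm, by rwa [Sym2.eq_swap]⟩
    · exact absurd (by simp [hC_edges, hc.mem_edges ha_p hb_p hab]) hab_C
  obtain ⟨w, hw, hyw, hyw_C⟩ := hchord
  refine ⟨w, hw, ?_, ?_, hyw⟩
  · rintro rfl
    simp [hC_edges] at hyw_C
  · rintro rfl
    simp [hC_edges, Sym2.eq_swap] at hyw_C

lemma IsChordal.adj_of_mem_support_of_isChordless (hG : G.IsChordal) {x z y : V}
    {p : G.Walk x z} (hp : p.IsPath) (hc : p.IsChordless) (hy : y ∉ p.support)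
    (hyx : G.Adj y x) (hyz : G.Adj y z) :
    ∀ v ∈ p.support, G.Adj y v := by
  induction hn : p.length using Nat.strong_induction_on generalizing x z with
  | _ n ih =>
  intro v hv
  rcases Nat.lt_or_ge n 2 with hlen | hlen
  · rcases eq_or_eq_of_mem_support_of_length_le_one (by omega) hv with rfl | rfl
    exacts [hyx, hyz]
  obtain ⟨w, hw, hwx, hwz, hyw⟩ := hG.exists_adj_of_isChordless_s4 hp hc (hn ▸ hlen) hy hyx hyz
  obtain ⟨q, r, rfl⟩ := mem_support_iff_exists_append.mp hw
  have hq : q.length ≠ 0 := fun h => hwx (eq_of_length_eq_zero h).symm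
  have hr : r.length ≠ 0 := fun h => hwz (eq_of_length_eq_zero h)
  rw [length_append] at hn
  rw [mem_support_append_iff] at hv hy
  rcases hv with hv | hv
  · exact ih q.length (by omega) hp.of_append_left (hc.of_append_left hp)
      (fun h => hy (.inl h)) hyx hyw rfl v hv
  · exact ih r.length (by omega) hp.of_append_right (hc.of_append_right hp)
      (fun h => hy (.inr h)) hyw hyz rfl v hv

end SimpleGraph

theorem stmt_4_general {V : Type*} (G : SimpleGraph V) (x z y : V) (P : G.Walk x z)
    (hchordal : G.IsChordal) (hpath : P.IsPath)
    (hchordless : ∀ a b : V, a ∈ P.support → b ∈ P.support → G.Adj a b → s(a, b) ∈ P.edges)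
    (hy : y ∉ P.support) (hyx : G.Adj y x) (hyz : G.Adj y z) :
    ∀ v ∈ P.support, G.Adj y v :=
  hchordal.adj_of_mem_support_of_isChordless hpath
    (SimpleGraph.Walk.isChordless_iff_forall_mem_edges.mpr fun a b => hchordless a b) hy hyx hyz

/-- Let `G` be a chordal graph, `P` a chordless (induced) path of length at least `3` with
endpoints `x` and `z`, and let `y` be a vertex not on `P` adjacent to both `x` and `z`.
Then `y` is adjacent to every vertex of `P`. -/
theorem stmt_4 {V : Type*} (G : SimpleGraph V) (x z y : V) (P : G.Walk x z)
    (hchordal : G.IsChordal) (hpath : P.IsPath) (hlen : 3 ≤ P.length)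
    (hchordless : ∀ a b : V, a ∈ P.support → b ∈ P.support → G.Adj a b → s(a, b) ∈ P.edges)
    (hy : y ∉ P.support) (hyx : G.Adj y x) (hyz : G.Adj y z) :
    ∀ v ∈ P.support, G.Adj y v :=
  stmt_4_general G x z y P hchordal hpath hchordless hy hyx hyz
end

section
/- Let n and k be positive integers with n ≥ k+1, and write n = q(k+1) + r where q and r are the unique integers with 0 ≤ r ≤ k. Then there exists a chordal graph of order n and minimum degree k whose number of edges equals q·binomial(k+1,2) + kr − r(r−1)/2. -/
/-!
Split the vertices `0, …, n - 1` into consecutive blocks of `k + 1` and join two vertices when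
they lie in the same block or both lie among the last `k + 1` vertices. For `n = (q+1)(k+1) + r`
this is `q` disjoint copies of `K_{k+1}` together with two copies of `K_{k+1}` sharing `k + 1 - r`
vertices: every degree is `k` except on the shared part, where it is `k + r`, and the handshake
lemma gives the number of edges. The last `k + 1` vertices form a clique and every other vertex is
simplicial, so in a cycle of length at least four the two cycle-neighbours of a simplicial vertex
(or of any vertex, if the cycle stays inside the clique) are joined by a chord.
-/

open scoped Classical

open Finset

theorem Fin.card_filter_le_and_lt {n a b : ℕ} (hb : b ≤ n) :
    #{i : Fin n | a ≤ i ∧ i < b} = b - a := by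
  rw [← card_map Fin.valEmbedding, ← Nat.card_Ico]
  congr 1
  ext i
  simp only [mem_map, mem_filter, mem_univ, true_and, Fin.valEmbedding_apply, mem_Ico]
  exact ⟨by rintro ⟨u, hu, rfl⟩; exact hu, fun hi => ⟨⟨i, by omega⟩, hi, rfl⟩⟩

namespace SimpleGraph

variable {V : Type*} {G : SimpleGraph V}

theorem Walk.IsCycle.mk_snd_penultimate_notMem_edges {v : V} {w : G.Walk v v} (hw : w.IsCycle)
    (hlen : 3 < w.length) : s(w.snd, w.penultimate) ∉ w.edges := by
  have hedges : w.edges = s(v, w.snd) :: w.tail.edges := by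
    conv_lhs => rw [← w.cons_tail_eq hw.not_nil]
    rw [edges_cons]
  rw [hedges, List.mem_cons, Sym2.eq_iff, not_or]
  refine ⟨?_, fun h => ?_⟩
  · rintro (⟨-, h⟩ | ⟨-, h⟩)
    · exact hw.snd_ne_penultimate h.symm
    · have := (hw.getVert_endpoint_iff (i := w.length - 1) (by omega)).1 h
      omega
  · have h2 : w.penultimate = w.getVert 2 := by
      rw [hw.isPath_tail.eq_snd_of_mem_edges h]
      exact w.getVert_tail
    have := hw.getVert_injOn (by simp only [Set.mem_ofPred_eq]; omega)
      (by simp only [Set.mem_ofPred_eq]; omega) h2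
    omega

theorem isChordal_of_isClique_of_isClique_neighborSet {S : Set V} (hS : G.IsClique S)
    (hsimp : ∀ x ∉ S, G.IsClique (G.neighborSet x)) : G.IsChordal := by
  intro v w hw hlen
  obtain ⟨x, hx, hadj⟩ : ∃ x, ∃ hx : x ∈ w.support,
      G.Adj (w.rotate x hx).snd (w.rotate x hx).penultimate := by
    by_cases h : ∀ x ∈ w.support, x ∈ S
    · have hc := hw.rotate w.start_mem_support
      exact ⟨v, w.start_mem_support, hS
        (h _ ((w.mem_support_rotate_iff _ _).1 (Walk.getVert_mem_support _ _)))
        (h _ ((w.mem_support_rotate_iff _ _).1 (Walk.getVert_mem_support _ _)))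
        hc.snd_ne_penultimate⟩
    · push Not at h
      obtain ⟨x, hx, hxS⟩ := h
      have hc := hw.rotate hx
      exact ⟨x, hx, hsimp x hxS (Walk.adj_snd hc.not_nil) (Walk.adj_penultimate hc.not_nil).symm
        hc.snd_ne_penultimate⟩
  refine ⟨_, _, hadj, (w.mem_support_rotate_iff _ hx).1 (Walk.getVert_mem_support _ _),
    (w.mem_support_rotate_iff _ hx).1 (Walk.getVert_mem_support _ _), fun h => ?_⟩
  exact (hw.rotate hx).mk_snd_penultimate_notMem_edges (by rwa [Walk.length_rotate])
    ((w.rotate_edges x hx).mem_iff.2 h)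

theorem degree_eq_of_adj_iff {n a b : ℕ} {G : SimpleGraph (Fin n)} [DecidableRel G.Adj]
    {v : Fin n} (hb : b ≤ n) (hav : a ≤ v) (hvb : v < b)
    (hadj : ∀ u, G.Adj v u ↔ u ≠ v ∧ a ≤ u ∧ u < b) : G.degree v = b - a - 1 := by
  have hN : G.neighborFinset v = ({u : Fin n | a ≤ u ∧ u < b} : Finset (Fin n)).erase v := by
    ext u
    simp [hadj]
  rw [← card_neighborFinset_eq_degree, hN, card_erase_of_mem (by simp [hav, hvb]),
    Fin.card_filter_le_and_lt hb]

end SimpleGraph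

open SimpleGraph

def blockCliqueGraph (n k : ℕ) : SimpleGraph (Fin n) where
  Adj u v := u ≠ v ∧
    ((u : ℕ) / (k + 1) = v / (k + 1) ∨ (n ≤ u + (k + 1) ∧ n ≤ v + (k + 1)))
  symm := ⟨fun _ _ h => ⟨h.1.symm, h.2.imp Eq.symm And.symm⟩⟩
  loopless := ⟨fun _ h => h.1 rfl⟩

section blockCliqueGraph

variable {n k q r : ℕ}

theorem blockCliqueGraph_adj {u v : Fin n} : (blockCliqueGraph n k).Adj u v ↔ u ≠ v ∧
    ((u : ℕ) / (k + 1) = v / (k + 1) ∨ (n ≤ u + (k + 1) ∧ n ≤ v + (k + 1))) :=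
  Iff.rfl

theorem blockCliqueGraph_adj_iff_interval {v u : Fin n} :
    (blockCliqueGraph n k).Adj v u ↔ u ≠ v ∧
      ((v / (k + 1) * (k + 1) ≤ u ∧ u < v / (k + 1) * (k + 1) + (k + 1)) ∨
        (n ≤ v + (k + 1) ∧ n ≤ u + (k + 1))) := by
  rw [blockCliqueGraph_adj, ne_comm, eq_comm, Nat.div_eq_iff (Nat.add_one_pos k),
    Nat.le_sub_one_iff_lt (by omega)]

theorem blockCliqueGraph_isChordal (n k : ℕ) : (blockCliqueGraph n k).IsChordal :=
  isChordal_of_isClique_of_isClique_neighborSet (S := {v | n ≤ v + (k + 1)})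
    (fun _ hu _ hv huv => ⟨huv, Or.inr ⟨hu, hv⟩⟩)
    fun _ hx _ hu _ hz huz => ⟨huz, Or.inl <|
      (hu.2.resolve_right fun h => hx h.1).symm.trans (hz.2.resolve_right fun h => hx h.1)⟩

theorem blockCliqueGraph_degree (hn : n = (q + 1) * (k + 1) + r) (hr : r ≤ k) (v : Fin n) :
    (blockCliqueGraph n k).degree v = if n ≤ v + (k + 1) ∧ v + r < n then k + r else k := by
  have hsucc := add_one_mul q (k + 1)
  by_cases htail : n ≤ v + (k + 1)
  · by_cases hlast : v + r < n
    · have hq : (v : ℕ) / (k + 1) = q :=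
        Nat.div_eq_of_lt_le (by omega) (by rw [add_one_mul]; omega)
      rw [if_pos ⟨htail, hlast⟩,
        degree_eq_of_adj_iff (a := q * (k + 1)) le_rfl (by omega) v.isLt]
      · omega
      intro u
      rw [blockCliqueGraph_adj_iff_interval, hq]
      omega
    · have hq : q + 1 ≤ v / (k + 1) := (Nat.le_div_iff_mul_le (Nat.add_one_pos k)).2 (by omega)
      have := Nat.mul_le_mul_right (k + 1) hq
      rw [if_neg (by omega), degree_eq_of_adj_iff (a := n - (k + 1)) le_rfl (by omega) v.isLt]
      · omega
      intro u
      rw [blockCliqueGraph_adj_iff_interval]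
      omega
  · have := Nat.div_mul_le_self v (k + 1)
    have := Nat.lt_div_mul_add (a := v) (Nat.add_one_pos k)
    rw [if_neg (by omega), degree_eq_of_adj_iff (b := v / (k + 1) * (k + 1) + (k + 1))
      (by omega) (by omega) (by omega)]
    · omega
    intro u
    rw [blockCliqueGraph_adj_iff_interval]
    omega

theorem blockCliqueGraph_minDegree (hn : n = (q + 1) * (k + 1) + r) (hr : r ≤ k) :
    (blockCliqueGraph n k).minDegree = k := by
  have hpos : 0 < n := by rw [hn]; positivity
  have : Nonempty (Fin n) := ⟨⟨0, hpos⟩⟩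
  have hdeg := blockCliqueGraph_degree hn hr
  refine le_antisymm ?_ (le_minDegree_of_forall_le_degree _ _ fun v => ?_)
  · refine (minDegree_le_degree _ ⟨n - 1, by omega⟩).trans_eq ?_
    rw [hdeg]
    dsimp only
    split_ifs <;> omega
  · rw [hdeg]
    split_ifs <;> omega

theorem blockCliqueGraph_two_mul_card_edgeFinset (hn : n = (q + 1) * (k + 1) + r) (hr : r ≤ k) :
    2 * #(blockCliqueGraph n k).edgeFinset = n * k + r * (k + 1 - r) := by
  have hoverlap : #{v : Fin n | n ≤ v + (k + 1) ∧ v + r < n} = k + 1 - r := by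
    have := add_one_mul q (k + 1)
    rw [filter_congr (q := fun v : Fin n => n - (k + 1) ≤ v ∧ v < n - r) fun v _ => by omega,
      Fin.card_filter_le_and_lt (by omega)]
    omega
  have hsplit := card_filter_add_card_filter_not (s := univ)
    fun v : Fin n => n ≤ v + (k + 1) ∧ v + r < n
  rw [card_univ, Fintype.card_fin, hoverlap] at hsplit
  rw [← sum_degrees_eq_twice_card_edges]
  simp_rw [blockCliqueGraph_degree hn hr]
  rw [sum_ite, sum_const, sum_const, smul_eq_mul, smul_eq_mul, hoverlap]
  set B := #{v : Fin n | ¬(n ≤ v + (k + 1) ∧ v + r < n)}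
  rw [← hsplit]
  ring

theorem blockCliqueGraph_card_edgeFinset (hn : n = (q + 1) * (k + 1) + r) (hr : r ≤ k) :
    #(blockCliqueGraph n k).edgeFinset = (q + 1) * (k + 1).choose 2 + k * r - r * (r - 1) / 2 := by
  have h2E := blockCliqueGraph_two_mul_card_edgeFinset hn hr
  have hchoose : (k + 1).choose 2 * 2 = (k + 1) * k := by
    simpa using Nat.choose_succ_right_eq (k + 1) 1
  have hr2 : r * (r - 1) / 2 * 2 = r * (r - 1) :=
    Nat.div_mul_cancel (Nat.even_mul_pred_self r).two_dvd
  apply Nat.eq_sub_of_add_eq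
  apply Nat.eq_of_mul_eq_mul_right two_pos
  rw [add_mul, hr2, add_mul, mul_assoc, hchoose, mul_comm _ 2, h2E, hn]
  obtain ⟨s, rfl⟩ := Nat.exists_eq_add_of_le hr
  rcases r with _ | r
  · ring
  · rw [show r + 1 + s + 1 - (r + 1) = s + 1 by omega, Nat.add_sub_cancel]
    ring

end blockCliqueGraph

theorem stmt_7_general (n k q r : ℕ) (hnk : k + 1 ≤ n)
    (hqr : n = q * (k + 1) + r) (hr : r ≤ k) :
    ∃ G : SimpleGraph (Fin n), G.IsChordal ∧ G.minDegree = k ∧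
      G.edgeFinset.card = q * Nat.choose (k + 1) 2 + k * r - r * (r - 1) / 2 := by
  obtain ⟨q, rfl⟩ := Nat.exists_eq_succ_of_ne_zero (n := q) (by rintro rfl; omega)
  exact ⟨blockCliqueGraph n k, blockCliqueGraph_isChordal n k, blockCliqueGraph_minDegree hqr hr,
    blockCliqueGraph_card_edgeFinset hqr hr⟩

/-- Let `n = q(k+1) + r` with `0 ≤ r ≤ k` and `n ≥ k+1`, `n, k ≥ 1`. There exists a chordal
graph of order `n` and minimum degree `k` with exactly
`q * C(k+1, 2) + k * r - r * (r-1) / 2` edges. -/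
theorem stmt_7 (n k q r : ℕ) (hn : 0 < n) (hk : 0 < k) (hnk : k + 1 ≤ n)
    (hqr : n = q * (k + 1) + r) (hr : r ≤ k) :
    ∃ G : SimpleGraph (Fin n), G.IsChordal ∧ G.minDegree = k ∧
      G.edgeFinset.card = q * Nat.choose (k + 1) 2 + k * r - r * (r - 1) / 2 :=
  stmt_7_general n k q r hnk hqr hr
end

section
/- Let k and r be integers with k ≥ 1 and 1 ≤ r ≤ k, and let n = k + 1 + r. Then the graph K_{k−r+1} ∨ (K_r + K_r), the join of a complete graph on k−r+1 vertices with the disjoint union of two complete graphs on r vertices each, is a chordal graph of order n and minimum degree k whose number of edges equals binomial(k+1,2) + kr − r(r−1)/2. -/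
open scoped Classical

/-- The join `G ∨ H` of two vertex-disjoint graphs: their disjoint union together with all
edges joining a vertex of `G` and a vertex of `H`. -/
def SimpleGraph.join {α β : Type*} (G : SimpleGraph α) (H : SimpleGraph β) :
    SimpleGraph (α ⊕ β) where
  Adj u v := match u, v with
    | Sum.inl u, Sum.inl v => G.Adj u v
    | Sum.inr u, Sum.inr v => H.Adj u v
    | _, _ => True
  symm := ⟨fun u v => match u, v with
    | Sum.inl _, Sum.inl _ => fun h => G.adj_symm h
    | Sum.inr _, Sum.inr _ => fun h => H.adj_symm h
    | Sum.inl _, Sum.inr _ | Sum.inr _, Sum.inl _ => fun _ => trivial⟩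
  loopless := ⟨fun u => by rcases u with u | u <;> exact fun h => (SimpleGraph.irrefl _) h⟩

/-!
In `K_{k-r+1} ∨ (K_r + K_r)` two distinct non-adjacent vertices lie in different copies of `K_r`,
so each of their common neighbours lies in `K_{k-r+1}` and is adjacent to every other vertex.
In such a graph a cycle `v, x, y, z, …` of length at least four has the chord `vy`, or else `x`
is a common neighbour of `v` and `y`, and `xz` is a chord. The degrees are `k + r` on
`K_{k-r+1}` and `k` on the copies of `K_r`, and the edge count follows from the degree-sum
formula applied to the join and to the disjoint union.
-/

namespace SimpleGraph

variable {V α β : Type*}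

lemma isChordal_of_common_neighbor_universal {G : SimpleGraph V}
    (hG : ∀ ⦃x y z⦄, G.Adj x z → G.Adj z y → x ≠ y → ¬G.Adj x y → ∀ t, z ≠ t → G.Adj z t) :
    G.IsChordal := by
  rintro v (_ | @⟨_, x, _, hvx, p⟩) hc hl
  · exact absurd hc Walk.not_isCycle_nil
  rw [Walk.cons_isCycle_iff] at hc
  obtain ⟨hp, -⟩ := hc
  rw [Walk.length_cons] at hl
  have hinj : ∀ i j, i ≤ p.length → j ≤ p.length → p.getVert i = p.getVert j → i = j :=
    fun i j hi hj h => hp.getVert_injOn hi hj h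
  have hmem : ∀ i, p.getVert i ∈ (Walk.cons hvx p).support := fun i =>
    List.mem_cons_of_mem _ (p.getVert_mem_support i)
  have hxy : G.Adj x (p.getVert 1) := by simpa using p.adj_getVert_succ (i := 0) (by omega)
  by_cases hvy : G.Adj v (p.getVert 1)
  · refine ⟨v, p.getVert 1, hvy, Walk.start_mem_support _, hmem 1, ?_⟩
    rw [Walk.edges_cons, List.mem_cons, not_or, Sym2.congr_right]
    refine ⟨fun h => absurd (hinj 1 0 (by omega) (by omega) (by rw [h, Walk.getVert_zero]))
      (by omega), fun h => ?_⟩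
    have := hinj 1 (p.length - 1) (by omega) (by omega) (hp.eq_penultimate_of_mem_edges h)
    omega
  · have hvy' : v ≠ p.getVert 1 := by
      intro h
      have := hinj p.length 1 le_rfl (by omega) ((Walk.getVert_length p).trans h)
      omega
    have hxz : x ≠ p.getVert 2 := fun h =>
      absurd (hinj 0 2 (by omega) (by omega) (by rw [Walk.getVert_zero]; exact h)) (by omega)
    refine ⟨_, _, hG hvx hxy hvy' hvy _ hxz, List.mem_cons_of_mem _ p.start_mem_support,
      hmem 2, ?_⟩
    rw [Walk.edges_cons, List.mem_cons, not_or, Sym2.eq_swap (a := v), Sym2.congr_right]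
    refine ⟨fun h => absurd (hinj 2 p.length (by omega) le_rfl (by rw [h, Walk.getVert_length]))
      (by omega), fun h => ?_⟩
    have := hinj 2 1 (by omega) (by omega) (hp.eq_snd_of_mem_edges h)
    omega

section Join

variable {G : SimpleGraph α} {H : SimpleGraph β}

@[simp] lemma join_adj_inl_inl {a a' : α} : (G.join H).Adj (.inl a) (.inl a') ↔ G.Adj a a' :=
  Iff.rfl

@[simp] lemma join_adj_inr_inr {b b' : β} : (G.join H).Adj (.inr b) (.inr b') ↔ H.Adj b b' :=
  Iff.rfl

@[simp] lemma join_adj_inl_inr {a : α} {b : β} : (G.join H).Adj (.inl a) (.inr b) := trivial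

@[simp] lemma join_adj_inr_inl {a : α} {b : β} : (G.join H).Adj (.inr b) (.inl a) := trivial

lemma isChordal_top_join (hH : ∀ ⦃x y z⦄, H.Adj x z → H.Adj z y → x ≠ y → H.Adj x y) :
    ((⊤ : SimpleGraph α).join H).IsChordal := by
  refine isChordal_of_common_neighbor_universal ?_
  rintro (x | x) (y | y) (z | z) hxz hzy hxy hnxy (t | t) hzt <;> simp_all
  exact absurd (hH hxz hzy hxy) hnxy

lemma degree_join_inl [Fintype β] (a : α) [Fintype (G.neighborSet a)]
    [Fintype ((G.join H).neighborSet (.inl a))] :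
    (G.join H).degree (.inl a) = G.degree a + Fintype.card β := by
  have : (G.join H).neighborFinset (.inl a) = (G.neighborFinset a).disjSum Finset.univ := by
    ext (x | x) <;> simp
  rw [← card_neighborFinset_eq_degree, this, Finset.card_disjSum, card_neighborFinset_eq_degree,
    Finset.card_univ]

lemma degree_join_inr [Fintype α] (b : β) [Fintype (H.neighborSet b)]
    [Fintype ((G.join H).neighborSet (.inr b))] :
    (G.join H).degree (.inr b) = H.degree b + Fintype.card α := by
  have : (G.join H).neighborFinset (.inr b) = Finset.univ.disjSum (H.neighborFinset b) := by
    ext (x | x) <;> simp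
  rw [← card_neighborFinset_eq_degree, this, Finset.card_disjSum, card_neighborFinset_eq_degree,
    Finset.card_univ, add_comm]

lemma card_edgeFinset_join [Fintype α] [Fintype β] [DecidableRel G.Adj] [DecidableRel H.Adj]
    [DecidableRel (G.join H).Adj] :
    (G.join H).edgeFinset.card =
      G.edgeFinset.card + H.edgeFinset.card + Fintype.card α * Fintype.card β := by
  have h := (G.join H).sum_degrees_eq_twice_card_edges
  simp only [Fintype.sum_sum_type, degree_join_inl, degree_join_inr, Finset.sum_add_distrib,
    G.sum_degrees_eq_twice_card_edges, H.sum_degrees_eq_twice_card_edges, Finset.sum_const,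
    Finset.card_univ, smul_eq_mul] at h
  linarith

end Join

section Sum

variable {G : SimpleGraph α} {H : SimpleGraph β}

lemma degree_sum_inl (a : α) [Fintype (G.neighborSet a)]
    [Fintype ((G ⊕g H).neighborSet (.inl a))] : (G ⊕g H).degree (.inl a) = G.degree a := by
  rw [← card_neighborSet_eq_degree, ← card_neighborSet_eq_degree]
  exact Fintype.card_congr <| (Equiv.setCongr (neighborSet_sum_inl a)).trans
    (Equiv.Set.image _ _ Sum.inl_injective).symm

lemma degree_sum_inr (b : β) [Fintype (H.neighborSet b)]
    [Fintype ((G ⊕g H).neighborSet (.inr b))] : (G ⊕g H).degree (.inr b) = H.degree b := by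
  rw [← card_neighborSet_eq_degree, ← card_neighborSet_eq_degree]
  exact Fintype.card_congr <| (Equiv.setCongr (neighborSet_sum_inr b)).trans
    (Equiv.Set.image _ _ Sum.inr_injective).symm

lemma card_edgeFinset_sum [Fintype α] [Fintype β] [DecidableRel G.Adj] [DecidableRel H.Adj]
    [DecidableRel (G ⊕g H).Adj] :
    (G ⊕g H).edgeFinset.card = G.edgeFinset.card + H.edgeFinset.card := by
  have h := (G ⊕g H).sum_degrees_eq_twice_card_edges
  simp only [Fintype.sum_sum_type, degree_sum_inl, degree_sum_inr,
    G.sum_degrees_eq_twice_card_edges, H.sum_degrees_eq_twice_card_edges] at h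
  omega

end Sum

lemma top_sum_top_adj_of_adj_of_adj {x y z : α ⊕ β}
    (hxz : ((⊤ : SimpleGraph α) ⊕g (⊤ : SimpleGraph β)).Adj x z)
    (hzy : ((⊤ : SimpleGraph α) ⊕g (⊤ : SimpleGraph β)).Adj z y) (hxy : x ≠ y) :
    ((⊤ : SimpleGraph α) ⊕g (⊤ : SimpleGraph β)).Adj x y := by
  rcases x with x | x <;> rcases y with y | y <;> rcases z with z | z <;> simp_all

end SimpleGraph

lemma choose_two_add_mul_eq {k r : ℕ} (hrk : r ≤ k) :
    (k - r + 1).choose 2 + (r.choose 2 + r.choose 2) + (k - r + 1) * (r + r) =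
      (k + 1).choose 2 + k * r - r * (r - 1) / 2 := by
  obtain ⟨m, rfl⟩ := Nat.exists_eq_add_of_le hrk
  rw [← Nat.choose_two_right, Nat.add_sub_cancel_left]
  refine Nat.eq_sub_of_add_eq (Nat.cast_injective (R := ℚ) ?_)
  push_cast [Nat.cast_choose_two]
  ring

open SimpleGraph in
theorem stmt_8_general (k r n : ℕ) (hr1 : 1 ≤ r) (hrk : r ≤ k) (hn : n = k + 1 + r) :
    (SimpleGraph.join (⊤ : SimpleGraph (Fin (k - r + 1)))
        ((⊤ : SimpleGraph (Fin r)) ⊕g (⊤ : SimpleGraph (Fin r)))).IsChordal ∧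
    Fintype.card (Fin (k - r + 1) ⊕ (Fin r ⊕ Fin r)) = n ∧
    (SimpleGraph.join (⊤ : SimpleGraph (Fin (k - r + 1)))
        ((⊤ : SimpleGraph (Fin r)) ⊕g (⊤ : SimpleGraph (Fin r)))).minDegree = k ∧
    (SimpleGraph.join (⊤ : SimpleGraph (Fin (k - r + 1)))
        ((⊤ : SimpleGraph (Fin r)) ⊕g (⊤ : SimpleGraph (Fin r)))).edgeFinset.card =
      Nat.choose (k + 1) 2 + k * r - r * (r - 1) / 2 := by
  set G := (⊤ : SimpleGraph (Fin (k - r + 1))).join ((⊤ : SimpleGraph (Fin r)) ⊕g ⊤)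
  have hdeg_inl (c : Fin (k - r + 1)) : G.degree (.inl c) = k + r := by
    rw [degree_join_inl, complete_graph_degree]
    simp only [Fintype.card_fin, Fintype.card_sum]
    omega
  have hdeg_inr (v : Fin r ⊕ Fin r) : G.degree (.inr v) = k := by
    rcases v with a | a <;>
      simp only [G, degree_join_inr, degree_sum_inl, degree_sum_inr, complete_graph_degree,
        Fintype.card_fin] <;> omega
  refine ⟨isChordal_top_join fun _ _ _ => top_sum_top_adj_of_adj_of_adj,
    by simp only [Fintype.card_sum, Fintype.card_fin]; omega, ?_, ?_⟩
  · have : Nonempty (Fin (k - r + 1) ⊕ (Fin r ⊕ Fin r)) := ⟨.inl 0⟩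
    refine le_antisymm ((minDegree_le_degree _ (.inr (.inl ⟨0, hr1⟩))).trans_eq (hdeg_inr _))
      (le_minDegree_of_forall_le_degree _ _ ?_)
    rintro (c | v)
    · rw [hdeg_inl]; omega
    · rw [hdeg_inr]
  · rw [card_edgeFinset_join, card_edgeFinset_sum]
    simp only [card_edgeFinset_top_eq_card_choose_two, Fintype.card_fin, Fintype.card_sum]
    exact choose_two_add_mul_eq hrk

/-- For `1 ≤ r ≤ k` and `n = k + 1 + r`, the graph `K_{k-r+1} ∨ (K_r + K_r)` is a chordal
graph of order `n` and minimum degree `k` with `C(k+1, 2) + k * r - r * (r-1) / 2` edges. -/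
theorem stmt_8 (k r n : ℕ) (hk : 1 ≤ k) (hr1 : 1 ≤ r) (hrk : r ≤ k) (hn : n = k + 1 + r) :
    (SimpleGraph.join (⊤ : SimpleGraph (Fin (k - r + 1)))
        ((⊤ : SimpleGraph (Fin r)) ⊕g (⊤ : SimpleGraph (Fin r)))).IsChordal ∧
    Fintype.card (Fin (k - r + 1) ⊕ (Fin r ⊕ Fin r)) = n ∧
    (SimpleGraph.join (⊤ : SimpleGraph (Fin (k - r + 1)))
        ((⊤ : SimpleGraph (Fin r)) ⊕g (⊤ : SimpleGraph (Fin r)))).minDegree = k ∧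
    (SimpleGraph.join (⊤ : SimpleGraph (Fin (k - r + 1)))
        ((⊤ : SimpleGraph (Fin r)) ⊕g (⊤ : SimpleGraph (Fin r)))).edgeFinset.card =
      Nat.choose (k + 1) 2 + k * r - r * (r - 1) / 2 :=
  stmt_8_general k r n hr1 hrk hn
end
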